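/- arXiv:2405.13690 — 5 statements merged into one kernel-verified Lean document; each statement's English description precedes it below -/
import Mathlib

section
/- For the convex function g(x) = e^x·y − z·x with y > 0 and z ∈ ℝ, the proximal operator satisfies prox_g(x, τ) = x + τz − W₀(τ·y·e^{x+τz}), where W₀ is the principal branch of the Lambert W function (the unique solution of w·e^w = t for t > 0). -/
open Real Set

/-!
The prox objective `(u - x)² / (2τ) + g u` of a differentiable convex `g` has the strictly increasing
derivative `(u - x) / τ + g' u`, so its minimiser is the unique zero of that derivative.
For `g u = eᵘ y - z u` the candidate `q = x + τz - w` is such a zero, because `w eʷ = τ y e^(x + τz)`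
says exactly that `τ y e^q = w`.
-/

theorem hasDerivAt_proxObjective {g : ℝ → ℝ} {g' x τ u : ℝ} (hτ : τ ≠ 0) (hg : HasDerivAt g g' u) :
    HasDerivAt (fun v => (v - x) ^ 2 / (2 * τ) + g v) ((u - x) / τ + g') u := by
  have hsq := (((hasDerivAt_id' u).sub_const x).pow 2).div_const (2 * τ)
  refine (hsq.add hg).congr_deriv ?_
  field_simp
  ring

theorem prox_eq_of_deriv_eq_zero {g g' : ℝ → ℝ} {x τ p q : ℝ} (hτ : 0 < τ)
    (hg : ∀ u, HasDerivAt g (g' u) u) (hg' : Monotone g')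
    (hp : IsMinOn (fun u => (u - x) ^ 2 / (2 * τ) + g u) univ p)
    (hq : (q - x) / τ + g' q = 0) : p = q := by
  have hmono : StrictMono fun u => (u - x) / τ + g' u :=
    StrictMono.add_monotone (fun a b hab => by gcongr) hg'
  have hp0 : (p - x) / τ + g' p = 0 :=
    (hp.isLocalMin Filter.univ_mem).hasDerivAt_eq_zero (hasDerivAt_proxObjective hτ.ne' (hg p))
  exact hmono.injective (hp0.trans hq.symm)

theorem mul_exp_sub_eq_of_mul_exp_eq {w c a : ℝ} (h : w * exp w = c * exp a) :
    c * exp (a - w) = w := by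
  rw [exp_sub, ← mul_div_assoc, ← h, mul_div_assoc, div_self (exp_ne_zero w), mul_one]

theorem prox_of_exp_linear_general (y zc τ x p w : ℝ) (hy : 0 < y) (hτ : 0 < τ)
    (hp : IsMinOn (fun u : ℝ => (u - x) ^ 2 / (2 * τ) + (Real.exp u * y - zc * u))
      Set.univ p)
    (hw : w * Real.exp w = τ * y * Real.exp (x + τ * zc)) :
    p = x + τ * zc - w := by
  have hg (u : ℝ) : HasDerivAt (fun v => exp v * y - zc * v) (exp u * y - zc) u := by
    refine (((hasDerivAt_exp u).mul_const y).sub ((hasDerivAt_id' u).const_mul zc)).congr_deriv ?_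
    rw [mul_one]
  have hg' : Monotone fun u => exp u * y - zc :=
    fun a b hab => by dsimp only; gcongr
  have hlambert : τ * y * exp (x + τ * zc - w) = w := mul_exp_sub_eq_of_mul_exp_eq hw
  refine prox_eq_of_deriv_eq_zero hτ hg hg' hp ?_
  field_simp
  linear_combination hlambert

/-- Proximal operator of g(u) = e^u·y − z·u is u ↦ x + τz − W₀(τ y e^{x+τz}),
where W₀ is characterized by w·e^w = t (unique for t > 0 among w ≥ 0). -/
theorem prox_of_exp_linear (y zc τ x p w : ℝ) (hy : 0 < y) (hτ : 0 < τ)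
    (hp : IsMinOn (fun u : ℝ => (u - x) ^ 2 / (2 * τ) + (Real.exp u * y - zc * u))
      Set.univ p)
    (hw0 : 0 ≤ w)
    (hw : w * Real.exp w = τ * y * Real.exp (x + τ * zc)) :
    p = x + τ * zc - w :=
  prox_of_exp_linear_general y zc τ x p w hy hτ hp hw
end

section
/- For a convex differentiable function f: ℝ → ℝ and α > 0, the derivative of the Moreau envelope satisfies M'_f(x, α) = (x − prox_f(x, α))/α = f'(prox_f(x, α)). -/
/-!
The first-order condition at the minimiser reads `prox x + α f'(prox x) = x`, so `prox` is the
resolvent of the monotone map `f'` and hence `1`-Lipschitz. Comparing the envelope at `x` and `y`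
with the value of each objective at the other point's minimiser squeezes
`M y - M x - (y - x) (x - prox x) / α` between two quantities of size `O((y - x)²)`.
-/

open Asymptotics Filter Set

lemma add_mul_deriv_eq_of_isLocalMin {f : ℝ → ℝ} {α x z : ℝ} (hα : α ≠ 0)
    (hf : DifferentiableAt ℝ f z)
    (hmin : IsLocalMin (fun w => (w - x) ^ 2 / (2 * α) + f w) z) :
    z + α * deriv f z = x := by
  have hD : HasDerivAt (fun w => (w - x) ^ 2 / (2 * α) + f w) ((z - x) / α + deriv f z) z :=
    (((((hasDerivAt_id z).sub_const x).pow 2).div_const (2 * α)).add hf.hasDerivAt).congr_deriv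
      (by simp only [id]; field_simp; ring)
  have h0 := hmin.hasDerivAt_eq_zero hD
  field_simp at h0
  linarith

lemma Monotone.abs_sub_le_abs_add_mul_sub {g : ℝ → ℝ} (hg : Monotone g) {α : ℝ} (hα : 0 ≤ α)
    (p q : ℝ) : |q - p| ≤ |q + α * g q - (p + α * g p)| := by
  rcases le_total p q with h | h
  · have := mul_le_mul_of_nonneg_left (hg h) hα
    rw [abs_of_nonneg (sub_nonneg.2 h), abs_of_nonneg (by linarith)]
    linarith
  · have := mul_le_mul_of_nonneg_left (hg h) hα
    rw [abs_of_nonpos (sub_nonpos.2 h), abs_of_nonpos (by linarith)]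
    linarith

section Moreau

variable {f : ℝ → ℝ} {α : ℝ} {prox M : ℝ → ℝ}

lemma prox_add_mul_deriv (hα : 0 < α) (hdiff : Differentiable ℝ f)
    (hprox : ∀ x, IsMinOn (fun z : ℝ => (z - x) ^ 2 / (2 * α) + f z) univ (prox x)) (x : ℝ) :
    prox x + α * deriv f (prox x) = x :=
  add_mul_deriv_eq_of_isLocalMin hα.ne' (hdiff _) ((hprox x).isLocalMin univ_mem)

lemma abs_prox_sub_le (hα : 0 < α) (hconv : ConvexOn ℝ univ f) (hdiff : Differentiable ℝ f)
    (hprox : ∀ x, IsMinOn (fun z : ℝ => (z - x) ^ 2 / (2 * α) + f z) univ (prox x)) (x y : ℝ) :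
    |prox y - prox x| ≤ |y - x| := by
  have hmono : Monotone (deriv f) := fun a b hab =>
    hconv.monotoneOn_deriv (fun z _ => hdiff z) (mem_univ a) (mem_univ b) hab
  simpa only [prox_add_mul_deriv hα hdiff hprox] using
    hmono.abs_sub_le_abs_add_mul_sub hα.le (prox x) (prox y)

lemma moreau_sub_sub_mem_Icc (hα : α ≠ 0)
    (hprox : ∀ x, IsMinOn (fun z : ℝ => (z - x) ^ 2 / (2 * α) + f z) univ (prox x))
    (hM : ∀ x, M x = (prox x - x) ^ 2 / (2 * α) + f (prox x)) (x y : ℝ) :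
    M y - M x - (y - x) * ((x - prox x) / α) ∈
      Icc ((y - x) * ((prox x - prox y) / α) + (y - x) ^ 2 / (2 * α)) ((y - x) ^ 2 / (2 * α)) := by
  have hy : (prox y - y) ^ 2 / (2 * α) + f (prox y) ≤ (prox x - y) ^ 2 / (2 * α) + f (prox x) :=
    hprox y (mem_univ (prox x))
  have hx : (prox x - x) ^ 2 / (2 * α) + f (prox x) ≤ (prox y - x) ^ 2 / (2 * α) + f (prox y) :=
    hprox x (mem_univ (prox y))
  rw [mem_Icc, hM x, hM y]
  constructor
  · have : (prox y - y) ^ 2 / (2 * α) - (prox y - x) ^ 2 / (2 * α)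
        = (y - x) * ((x - prox x) / α) + (y - x) * ((prox x - prox y) / α)
          + (y - x) ^ 2 / (2 * α) := by
      field_simp
      ring
    linarith
  · have : (prox x - y) ^ 2 / (2 * α) - (prox x - x) ^ 2 / (2 * α)
        = (y - x) * ((x - prox x) / α) + (y - x) ^ 2 / (2 * α) := by
      field_simp
      ring
    linarith

lemma abs_moreau_sub_sub_le (hα : 0 < α) (hconv : ConvexOn ℝ univ f)
    (hdiff : Differentiable ℝ f)
    (hprox : ∀ x, IsMinOn (fun z : ℝ => (z - x) ^ 2 / (2 * α) + f z) univ (prox x))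
    (hM : ∀ x, M x = (prox x - x) ^ 2 / (2 * α) + f (prox x)) (x y : ℝ) :
    |M y - M x - (y - x) * ((x - prox x) / α)| ≤ 3 * ((y - x) ^ 2 / (2 * α)) := by
  obtain ⟨hlow, hupp⟩ := moreau_sub_sub_mem_Icc hα.ne' hprox hM x y
  have hcross : |(y - x) * ((prox x - prox y) / α)| ≤ 2 * ((y - x) ^ 2 / (2 * α)) :=
    calc |(y - x) * ((prox x - prox y) / α)| = |y - x| * |prox y - prox x| / α := by
          rw [abs_mul, abs_div, abs_of_pos hα, abs_sub_comm (prox x), mul_div_assoc]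
      _ ≤ |y - x| * |y - x| / α := by
          have := abs_prox_sub_le hα hconv hdiff hprox x y
          gcongr
      _ = 2 * ((y - x) ^ 2 / (2 * α)) := by rw [← sq, sq_abs]; field_simp
  rw [abs_le] at hcross ⊢
  constructor <;> linarith [hcross.1, (by positivity : 0 ≤ (y - x) ^ 2 / (2 * α))]

end Moreau

theorem moreau_deriv_general (f : ℝ → ℝ) (α : ℝ) (hα : 0 < α)
    (hconv : ConvexOn ℝ Set.univ f) (hdiff : Differentiable ℝ f)
    (prox M : ℝ → ℝ)
    (hprox : ∀ x, IsMinOn (fun z : ℝ => (z - x) ^ 2 / (2 * α) + f z) Set.univ (prox x))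
    (hM : ∀ x, M x = (prox x - x) ^ 2 / (2 * α) + f (prox x))
    (x : ℝ) :
    HasDerivAt M ((x - prox x) / α) x ∧ (x - prox x) / α = deriv f (prox x) := by
  have hres := prox_add_mul_deriv hα hdiff hprox x
  refine ⟨?_, by field_simp; linarith⟩
  rw [hasDerivAt_iff_isLittleO]
  refine IsBigO.trans_isLittleO ?_ (isLittleO_pow_sub_sub x one_lt_two)
  refine IsBigO.of_bound (3 / (2 * α)) (Eventually.of_forall fun y => ?_)
  simpa only [Real.norm_eq_abs, smul_eq_mul, abs_pow, sq_abs, mul_comm_div, mul_div_assoc]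
    using abs_moreau_sub_sub_le hα hconv hdiff hprox hM x y

/-- Derivative of the Moreau envelope: M'_f(x,α) = (x − prox_f(x,α))/α = f'(prox_f(x,α)). -/
theorem moreau_deriv (f : ℝ → ℝ) (α : ℝ) (hα : 0 < α)
    (hconv : ConvexOn ℝ Set.univ f) (hdiff : Differentiable ℝ f)
    (hcont : Continuous (deriv f))
    (prox M : ℝ → ℝ)
    (hprox : ∀ x, IsMinOn (fun z : ℝ => (z - x) ^ 2 / (2 * α) + f z) Set.univ (prox x))
    (hM : ∀ x, M x = (prox x - x) ^ 2 / (2 * α) + f (prox x))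
    (x : ℝ) :
    HasDerivAt M ((x - prox x) / α) x ∧ (x - prox x) / α = deriv f (prox x) :=
  moreau_deriv_general f α hα hconv hdiff prox M hprox hM x
end

section
/- For a convex twice continuously differentiable function f and α > 0, the second derivative of the Moreau envelope satisfies M''_f(x, α) = f''(p)/(1 + α·f''(p)), where p = prox_f(x, α). -/
/-!
The first-order condition for the prox reads `p + α f'(p) = x`, so `prox` is the inverse of the
map `g z = z + α f'(z)`. Convexity makes `g' = 1 + α f'' ≥ 1`, hence `g` is a strictly monotone
bijection and the inverse function theorem gives `prox' = 1 / (1 + α f''(p))`. By the envelope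
theorem `M'(x) = (x - prox x) / α`, and differentiating once more yields
`(1 - prox'(x)) / α = f''(p) / (1 + α f''(p))`.
-/

open Set

lemma StrictMono.continuous_of_rightInverse {α β : Type*} [LinearOrder α] [TopologicalSpace α]
    [OrderTopology α] [DenselyOrdered α] [LinearOrder β] [TopologicalSpace β] [OrderTopology β]
    {g : α → β} {h : β → α} (hg : StrictMono g) (hgh : Function.RightInverse h g) :
    Continuous h :=
  Monotone.continuous_of_surjective (fun a b hab => hg.le_iff_le.mp (by rwa [hgh a, hgh b]))
    fun z => ⟨g z, hg.injective (hgh (g z))⟩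

lemma ConvexOn.monotone_deriv {f : ℝ → ℝ} (hconv : ConvexOn ℝ univ f)
    (hf : Differentiable ℝ f) : Monotone (deriv f) :=
  fun a b hab => hconv.monotoneOn_deriv (fun z _ => hf z) (mem_univ a) (mem_univ b) hab

section Prox

variable {f : ℝ → ℝ} {α : ℝ}

lemma add_mul_deriv_eq_of_isMinOn {x p : ℝ} (hα : α ≠ 0) (hf : DifferentiableAt ℝ f p)
    (hmin : IsMinOn (fun z : ℝ => (z - x) ^ 2 / (2 * α) + f z) univ p) :
    p + α * deriv f p = x := by
  have hderiv : HasDerivAt (fun z : ℝ => (z - x) ^ 2 / (2 * α) + f z)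
      ((p - x) / α + deriv f p) p := by
    refine ((((hasDerivAt_id' p).sub_const x).fun_pow 2).div_const (2 * α)).add hf.hasDerivAt
      |>.congr_deriv ?_
    field_simp
    ring
  have hzero := (hmin.isLocalMin Filter.univ_mem).hasDerivAt_eq_zero hderiv
  field_simp at hzero
  linarith

lemma hasDerivAt_of_add_mul_deriv_eq {prox : ℝ → ℝ} (hf' : Differentiable ℝ (deriv f))
    (hpos : ∀ z, 0 < 1 + α * deriv (deriv f) z)
    (hfo : ∀ y, prox y + α * deriv f (prox y) = y) (y : ℝ) :
    HasDerivAt prox (1 + α * deriv (deriv f) (prox y))⁻¹ y := by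
  let g : ℝ → ℝ := fun z => z + α * deriv f z
  have hg z : HasDerivAt g (1 + α * deriv (deriv f) z) z :=
    (hasDerivAt_id z).add ((hf' z).hasDerivAt.const_mul α)
  have hg_mono : StrictMono g := strictMono_of_deriv_pos fun z => (hg z).deriv ▸ hpos z
  exact .of_local_left_inverse (hg_mono.continuous_of_rightInverse hfo).continuousAt
    (hg (prox y)) (hpos (prox y)).ne' (.of_forall hfo)

/-- The envelope theorem: the dependence of `prox` on `y` does not contribute to `M'`. -/
lemma hasDerivAt_moreau {prox M : ℝ → ℝ} {p' y : ℝ} (hα : α ≠ 0)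
    (hf : DifferentiableAt ℝ f (prox y)) (hprox : HasDerivAt prox p' y)
    (hfo : prox y + α * deriv f (prox y) = y)
    (hM : ∀ x, M x = (prox x - x) ^ 2 / (2 * α) + f (prox x)) :
    HasDerivAt M ((y - prox y) / α) y := by
  have hf' : deriv f (prox y) = (y - prox y) / α := by
    field_simp
    linarith
  rw [funext hM]
  refine (((hprox.sub (hasDerivAt_id' y)).fun_pow 2).div_const (2 * α)).add
    (hf.hasDerivAt.comp y hprox) |>.congr_deriv ?_
  rw [hf', Pi.sub_apply]
  field_simp
  ring

end Prox

/-- Second derivative of the Moreau envelope: M''_f(x,α) = f''(p)/(1+α f''(p)), p = prox_f(x,α). -/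
theorem moreau_second_deriv (f : ℝ → ℝ) (α : ℝ) (hα : 0 < α)
    (hconv : ConvexOn ℝ Set.univ f) (hf : ContDiff ℝ 2 f)
    (prox M : ℝ → ℝ)
    (hprox : ∀ x, IsMinOn (fun z : ℝ => (z - x) ^ 2 / (2 * α) + f z) Set.univ (prox x))
    (hM : ∀ x, M x = (prox x - x) ^ 2 / (2 * α) + f (prox x))
    (x : ℝ) :
    HasDerivAt (deriv M)
      (deriv (deriv f) (prox x) / (1 + α * deriv (deriv f) (prox x))) x := by
  obtain ⟨hfd, -, hf'⟩ := (contDiff_succ_iff_deriv (n := 1)).mp hf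
  have hf'd : Differentiable ℝ (deriv f) := hf'.differentiable one_ne_zero
  have hpos z : 0 < 1 + α * deriv (deriv f) z := by
    have := (hconv.monotone_deriv hfd).deriv_nonneg (x := z)
    positivity
  have hfo y : prox y + α * deriv f (prox y) = y :=
    add_mul_deriv_eq_of_isMinOn hα.ne' (hfd _) (hprox y)
  have hprox' := hasDerivAt_of_add_mul_deriv_eq hf'd hpos hfo
  have hM' : deriv M = fun y => (y - prox y) / α :=
    funext fun y => (hasDerivAt_moreau hα.ne' (hfd _) (hprox' y) (hfo y) hM).deriv
  rw [hM']
  refine ((hasDerivAt_id' x).sub (hprox' x)).div_const α |>.congr_deriv ?_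
  have := (hpos (prox x)).ne'
  field_simp
  ring
end

section
/- For Z ~ N(0,1), σ > 0 and μ, α ∈ ℝ: E[Z·relu(σZ + μ − α)] = σ·Φ̄((α−μ)/σ), where relu(t) = max(t, 0). -/
open MeasureTheory ProbabilityTheory

noncomputable def gaussPDF (t : ℝ) : ℝ := Real.exp (-t ^ 2 / 2) / Real.sqrt (2 * Real.pi)

noncomputable def PhiBar (x : ℝ) : ℝ := ∫ t in Set.Ici x, gaussPDF t

noncomputable def relu (t : ℝ) : ℝ := max t 0

/-!
With `c = (α - μ) / σ` the integrand is `σ · z · relu (z - c)`. Since `φ' = -z φ`, integrating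
`z (z - c) φ(z)` by parts over `(c, ∞)` gives `∫_c^∞ φ = Φ̄(c)`: this is Stein's identity
`E[Z g(Z)] = E[g'(Z)]` for `g = relu (· - c)`.
-/

open Set Filter Topology

lemma relu_mul_of_nonneg {a : ℝ} (ha : 0 ≤ a) (t : ℝ) : relu (a * t) = a * relu t := by
  rw [relu, relu, mul_max_of_nonneg _ _ ha, mul_zero]

lemma relu_sub_eq_indicator (c z : ℝ) : relu (z - c) = (Ioi c).indicator (· - c) z := by
  by_cases hz : c < z
  · rw [indicator_of_mem (mem_Ioi.2 hz), relu, max_eq_left (sub_nonneg.2 hz.le)]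
  · rw [not_lt] at hz
    rw [indicator_of_notMem (notMem_Ioi.2 hz), relu, max_eq_right (sub_nonpos.2 hz)]

lemma gaussPDF_eq_gaussianPDFReal : gaussPDF = gaussianPDFReal 0 1 := by
  funext x
  simp [gaussPDF, gaussianPDFReal, Real.exp_neg, div_eq_mul_inv, mul_comm]

lemma hasDerivAt_gaussPDF (z : ℝ) : HasDerivAt gaussPDF (-z * gaussPDF z) z :=
  ((((hasDerivAt_pow 2 z).neg).div_const 2).exp.div_const (Real.sqrt (2 * Real.pi))).congr_deriv
    (by simp only [gaussPDF, Pi.neg_apply]; ring)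

lemma integrable_pow_mul_gaussPDF (n : ℕ) : Integrable fun z : ℝ ↦ z ^ n * gaussPDF z := by
  have h := (integrable_rpow_mul_exp_neg_mul_sq (b := 1 / 2) (by norm_num)
    (s := n) (by linarith [n.cast_nonneg (α := ℝ)])).div_const (Real.sqrt (2 * Real.pi))
  convert h using 2 with z
  rw [Real.rpow_natCast, gaussPDF]
  ring_nf

-- `-(z - c) φ(z)` is a primitive of `z (z - c) φ(z) - φ(z)` vanishing at `c` and at `∞`.
lemma integral_Ioi_mul_sub_mul_gaussPDF (c : ℝ) :
    ∫ z in Ioi c, z * (z - c) * gaussPDF z = ∫ z in Ioi c, gaussPDF z := by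
  have hφ : Integrable gaussPDF := by simpa using integrable_pow_mul_gaussPDF 0
  have hf : Integrable fun z ↦ z * (z - c) * gaussPDF z := by
    refine ((integrable_pow_mul_gaussPDF 2).sub
      ((integrable_pow_mul_gaussPDF 1).const_mul c)).congr (ae_of_all _ fun z ↦ ?_)
    simp only [Pi.sub_apply]
    ring
  have hprim_int : Integrable fun z ↦ -((z - c) * gaussPDF z) := by
    refine ((integrable_pow_mul_gaussPDF 1).sub (hφ.const_mul c)).neg.congr
      (ae_of_all _ fun z ↦ ?_)
    simp only [Pi.neg_apply, Pi.sub_apply]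
    ring
  have hderiv : ∀ z, HasDerivAt (fun z ↦ -((z - c) * gaussPDF z))
      (z * (z - c) * gaussPDF z - gaussPDF z) z := fun z ↦
    (((hasDerivAt_id z).sub_const c).mul (hasDerivAt_gaussPDF z)).neg.congr_deriv
      (by simp only [id]; ring)
  have hderiv_int := (hf.sub hφ).integrableOn (s := Ioi c)
  have hprim_lim := tendsto_zero_of_hasDerivAt_of_integrableOn_Ioi (fun z _ ↦ hderiv z) hderiv_int
    hprim_int.integrableOn
  have key := integral_Ioi_of_hasDerivAt_of_tendsto' (fun z _ ↦ hderiv z) hderiv_int hprim_lim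
  rw [integral_sub hf.integrableOn hφ.integrableOn, sub_self, zero_mul, neg_zero, sub_zero] at key
  exact sub_eq_zero.1 key

lemma integral_mul_relu_sub_gaussianReal (c : ℝ) :
    ∫ z, z * relu (z - c) ∂gaussianReal 0 1 = PhiBar c := by
  have h (z : ℝ) : gaussPDF z * (z * relu (z - c))
      = (Ioi c).indicator (fun z ↦ z * (z - c) * gaussPDF z) z := by
    simp only [relu_sub_eq_indicator, indicator_apply, mem_Ioi]
    split_ifs <;> ring
  simp_rw [integral_gaussianReal_eq_integral_smul one_ne_zero, ← gaussPDF_eq_gaussianPDFReal,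
    smul_eq_mul, h, integral_indicator measurableSet_Ioi, integral_Ioi_mul_sub_mul_gaussPDF,
    PhiBar, integral_Ici_eq_integral_Ioi]

/-- E[Z·relu(σZ + μ − α)] = σ·Φ̄((α−μ)/σ) for Z ~ N(0,1). -/
theorem gauss_z_relu_mean (σ μ α : ℝ) (hσ : 0 < σ) :
    (∫ z, z * relu (σ * z + μ - α) ∂(gaussianReal 0 1)) = σ * PhiBar ((α - μ) / σ) := by
  have h : ∀ z, z * relu (σ * z + μ - α) = σ * (z * relu (z - (α - μ) / σ)) := fun z ↦ by
    rw [mul_left_comm, ← relu_mul_of_nonneg hσ.le, mul_sub, mul_div_cancel₀ _ hσ.ne',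
      sub_sub_eq_add_sub]
  simp_rw [h, integral_const_mul, integral_mul_relu_sub_gaussianReal]
end

section
/- Laplace principle for the Moreau envelope: for a convex continuous function b: ℝ → ℝ with b(z) ≥ c₁|z| − c₂ for some c₁ > 0 (coercivity), and α > 0, one has lim_{γ→∞} −(1/γ)·log ∫_ℝ exp(−γ[(z−x)²/(2α) + b(z)]) dz = M_b(x, α) = min_z { (z−x)²/(2α) + b(z) }. -/
/-!
For `γ ≥ 1` and a minimizer `p` of `f`, write `e^{-γ f} = e^{-(γ-1) f} e^{-f}`. Bounding
`e^{-(γ-1) f}` above by `e^{-(γ-1) f(p)}` everywhere, and below by `e^{-(γ-1) a}` on the open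
sublevel set `{f < a}` (which has positive measure for every `a > f(p)`), sandwiches
`∫ e^{-γ f}` between `e^{-(γ-1) a} K_a` and `e^{-(γ-1) f(p)} K` with `K_a, K > 0` independent of
`γ`. After `-(1/γ) log`, both bounds tend to their exponent rate, so the limit is `f(p)`.
The Moreau objective is continuous and dominates a Gaussian, so `e^{-f}` is integrable.
-/

open Filter Topology MeasureTheory Real

lemma exp_neg_mul_le_exp_mul_exp_neg {γ c t : ℝ} (hγ : 1 ≤ γ) (h : c ≤ t) :
    exp (-γ * t) ≤ exp (-(γ - 1) * c) * exp (-t) := by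
  rw [← exp_add]
  exact exp_le_exp.2 (by nlinarith)

lemma exp_mul_exp_neg_le_exp_neg_mul {γ c t : ℝ} (hγ : 1 ≤ γ) (h : t ≤ c) :
    exp (-(γ - 1) * c) * exp (-t) ≤ exp (-γ * t) := by
  rw [← exp_add]
  exact exp_le_exp.2 (by nlinarith)

lemma neg_one_div_mul_log_le_of_le {γ u v : ℝ} (hγ : 0 < γ) (hu : 0 < u) (huv : u ≤ v) :
    -(1 / γ) * log v ≤ -(1 / γ) * log u :=
  mul_le_mul_of_nonpos_left (log_le_log hu huv) (neg_nonpos.2 (by positivity))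

lemma tendsto_neg_one_div_mul_log_exp_mul (c K : ℝ) (hK : 0 < K) :
    Tendsto (fun γ : ℝ => -(1 / γ) * log (exp (-(γ - 1) * c) * K)) atTop (𝓝 c) := by
  have h : Tendsto (fun γ : ℝ => c - (c + log K) / γ) atTop (𝓝 c) := by
    simpa using tendsto_const_nhds.sub ((tendsto_const_nhds (x := c + log K)).div_atTop tendsto_id)
  refine h.congr' ?_
  filter_upwards [eventually_ne_atTop 0] with γ hγ
  rw [log_mul (exp_pos _).ne' hK.ne', log_exp]
  field_simp
  ring

section

variable {X : Type*} [MeasurableSpace X] {μ : Measure X} {f : X → ℝ} {γ c : ℝ}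

lemma MeasureTheory.Integrable.exp_neg_mul (hf : AEStronglyMeasurable f μ)
    (hint : Integrable (fun z => exp (-f z)) μ) (hγ : 1 ≤ γ) (hfc : ∀ z, c ≤ f z) :
    Integrable (fun z => exp (-γ * f z)) μ := by
  refine (hint.const_mul (exp (-(γ - 1) * c))).mono ?_ (ae_of_all _ fun z => ?_)
  · exact (hf.aemeasurable.const_mul _).exp.aestronglyMeasurable
  · simp only [norm_eq_abs, abs_of_pos (exp_pos _), abs_of_pos (mul_pos (exp_pos _) (exp_pos _))]
    exact exp_neg_mul_le_exp_mul_exp_neg hγ (hfc z)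

lemma integral_exp_neg_mul_le (hint : Integrable (fun z => exp (-f z)) μ) (hγ : 1 ≤ γ)
    (hfc : ∀ z, c ≤ f z) :
    ∫ z, exp (-γ * f z) ∂μ ≤ exp (-(γ - 1) * c) * ∫ z, exp (-f z) ∂μ := by
  rw [← integral_const_mul]
  exact integral_mono_of_nonneg (ae_of_all _ fun _ => (exp_pos _).le)
    (hint.const_mul _) (ae_of_all _ fun z => exp_neg_mul_le_exp_mul_exp_neg hγ (hfc z))

lemma mul_setIntegral_exp_neg_le_integral {s : Set X} (hs : MeasurableSet s)
    (hint : Integrable (fun z => exp (-f z)) μ) (hintγ : Integrable (fun z => exp (-γ * f z)) μ)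
    (hγ : 1 ≤ γ) (hfc : ∀ z ∈ s, f z ≤ c) :
    exp (-(γ - 1) * c) * ∫ z in s, exp (-f z) ∂μ ≤ ∫ z, exp (-γ * f z) ∂μ :=
  calc exp (-(γ - 1) * c) * ∫ z in s, exp (-f z) ∂μ
      = ∫ z in s, exp (-(γ - 1) * c) * exp (-f z) ∂μ := (integral_const_mul _ _).symm
    _ ≤ ∫ z in s, exp (-γ * f z) ∂μ :=
        setIntegral_mono_on (hint.const_mul _).integrableOn hintγ.integrableOn hs
          fun z hz => exp_mul_exp_neg_le_exp_neg_mul hγ (hfc z hz)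
    _ ≤ ∫ z, exp (-γ * f z) ∂μ := setIntegral_le_integral hintγ (ae_of_all _ fun _ => (exp_pos _).le)

end

theorem tendsto_neg_one_div_mul_log_integral_exp_neg_mul {X : Type*} [MeasurableSpace X]
    [TopologicalSpace X] [OpensMeasurableSpace X] {μ : Measure X} [μ.IsOpenPosMeasure]
    {f : X → ℝ} (hf : Continuous f) {p : X} (hp : IsMinOn f Set.univ p)
    (hint : Integrable (fun z => exp (-f z)) μ) :
    Tendsto (fun γ : ℝ => -(1 / γ) * log (∫ z, exp (-γ * f z) ∂μ)) atTop (𝓝 (f p)) := by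
  have : Nonempty X := ⟨p⟩
  have hmin : ∀ z, f p ≤ f z := fun z => hp (Set.mem_univ z)
  have hintγ : ∀ γ : ℝ, 1 ≤ γ → Integrable (fun z => exp (-γ * f z)) μ := fun γ hγ =>
    hint.exp_neg_mul hf.aestronglyMeasurable hγ hmin
  rw [tendsto_order]
  constructor
  · intro a ha
    have hK : 0 < ∫ z, exp (-f z) ∂μ := integral_exp_pos hint
    filter_upwards [(tendsto_neg_one_div_mul_log_exp_mul _ _ hK).eventually (lt_mem_nhds ha),
      eventually_ge_atTop 1] with γ hlt hγ
    exact hlt.trans_le <| neg_one_div_mul_log_le_of_le (by linarith)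
      (integral_exp_pos (hintγ γ hγ)) (integral_exp_neg_mul_le hint hγ hmin)
  · intro a ha
    obtain ⟨a', hpa', ha'a⟩ := exists_between ha
    have hU : IsOpen {z | f z < a'} := isOpen_lt hf continuous_const
    have : NeZero (μ.restrict {z | f z < a'}) :=
      ⟨by simpa [Measure.restrict_eq_zero] using (hU.measure_pos μ ⟨p, hpa'⟩).ne'⟩
    have hK : 0 < ∫ z in {z | f z < a'}, exp (-f z) ∂μ := integral_exp_pos hint.integrableOn
    filter_upwards [(tendsto_neg_one_div_mul_log_exp_mul _ _ hK).eventually (gt_mem_nhds ha'a),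
      eventually_ge_atTop 1] with γ hlt hγ
    refine lt_of_le_of_lt (neg_one_div_mul_log_le_of_le (by linarith) (by positivity) ?_) hlt
    exact mul_setIntegral_exp_neg_le_integral hU.measurableSet hint (hintγ γ hγ) hγ
      fun z hz => le_of_lt hz

lemma integrable_exp_neg_of_sq_sub_le {f : ℝ → ℝ} (hf : AEStronglyMeasurable f) {a x C : ℝ}
    (ha : 0 < a) (hfc : ∀ z, a * (z - x) ^ 2 - C ≤ f z) :
    Integrable (fun z => exp (-f z)) := by
  refine (((integrable_exp_neg_mul_sq ha).comp_sub_right x).const_mul (exp C)).mono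
    (hf.aemeasurable.neg.exp.aestronglyMeasurable) (ae_of_all _ fun z => ?_)
  simp only [norm_eq_abs, abs_of_pos (exp_pos _), ← exp_add]
  exact exp_le_exp.2 (by linarith [hfc z])

theorem laplace_moreau_general (b : ℝ → ℝ) (x α c₁ c₂ : ℝ) (hα : 0 < α) (hc₁ : 0 < c₁)
    (hcont : Continuous b)
    (hgrow : ∀ z, c₁ * |z| - c₂ ≤ b z)
    (p : ℝ)
    (hp : IsMinOn (fun z : ℝ => (z - x) ^ 2 / (2 * α) + b z) Set.univ p) :
    Tendsto
      (fun γ : ℝ =>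
        -(1 / γ) * Real.log (∫ z : ℝ, Real.exp (-γ * ((z - x) ^ 2 / (2 * α) + b z))))
      atTop (nhds ((p - x) ^ 2 / (2 * α) + b p)) := by
  have hf : Continuous fun z : ℝ => (z - x) ^ 2 / (2 * α) + b z := by fun_prop
  have hquad : ∀ z, 1 / (2 * α) * (z - x) ^ 2 - c₂ ≤ (z - x) ^ 2 / (2 * α) + b z := fun z => by
    have := hgrow z
    have := mul_nonneg hc₁.le (abs_nonneg z)
    rw [one_div_mul_eq_div]
    linarith
  exact tendsto_neg_one_div_mul_log_integral_exp_neg_mul hf hp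
    (integrable_exp_neg_of_sq_sub_le hf.aestronglyMeasurable (by positivity) hquad)

/-- Laplace principle for the Moreau envelope. -/
theorem laplace_moreau (b : ℝ → ℝ) (x α c₁ c₂ : ℝ) (hα : 0 < α) (hc₁ : 0 < c₁)
    (hconv : ConvexOn ℝ Set.univ b) (hcont : Continuous b)
    (hgrow : ∀ z, c₁ * |z| - c₂ ≤ b z)
    (p : ℝ)
    (hp : IsMinOn (fun z : ℝ => (z - x) ^ 2 / (2 * α) + b z) Set.univ p) :
    Tendsto
      (fun γ : ℝ =>
        -(1 / γ) * Real.log (∫ z : ℝ, Real.exp (-γ * ((z - x) ^ 2 / (2 * α) + b z))))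
      atTop (nhds ((p - x) ^ 2 / (2 * α) + b p)) :=
  laplace_moreau_general b x α c₁ c₂ hα hc₁ hcont hgrow p hp
end
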